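/- Let W and Z be real d×k matrices partitioned into n row blocks, and let S ⊆ [n] be a set of block indices with complement S^c. Suppose ‖Z_i‖_F < 1 for every block i ∈ S^c, ‖Z_i‖_F ≤ 1 for every i ∈ S, and ⟨Z, W⟩ = ‖W‖_{B,2,1} = Σ_i ‖W_i‖_F. Then W_i = 0 for every i ∈ S^c. -/

import Mathlib

/-!
On each block, Cauchy–Schwarz and `‖Z_i‖_F ≤ 1` give `⟨Z_i, W_i⟩ ≤ ‖Z_i‖_F ‖W_i‖_F ≤ ‖W_i‖_F`.
Summing, the alignment `⟨Z, W⟩ = Σ_i ‖W_i‖_F` forces equality in every block, and on a block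
with `‖Z_i‖_F < 1` the resulting `‖W_i‖_F ≤ ‖Z_i‖_F ‖W_i‖_F` is only possible when `‖W_i‖_F = 0`.
-/

/-- Frobenius norm of the `i`-th row block of a row-block-partitioned matrix. -/
noncomputable def blockFrob {n k : ℕ} {d : Fin n → ℕ}
    (W : Matrix ((i : Fin n) × Fin (d i)) (Fin k) ℝ) (i : Fin n) : ℝ :=
  Real.sqrt (∑ a, ∑ j, (W ⟨i, a⟩ j)^2)

theorem Finset.eq_zero_of_sum_eq_of_le_mul {ι : Type*} {s : Finset ι} {f g c : ι → ℝ}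
    (hg : ∀ i ∈ s, 0 ≤ g i) (hc : ∀ i ∈ s, c i ≤ 1) (hfg : ∀ i ∈ s, f i ≤ c i * g i)
    (hsum : ∑ i ∈ s, f i = ∑ i ∈ s, g i) {i : ι} (hi : i ∈ s) (hci : c i < 1) :
    g i = 0 := by
  have hle : ∀ i ∈ s, f i ≤ g i := fun i hi =>
    (hfg i hi).trans (mul_le_of_le_one_left (hg i hi) (hc i hi))
  have hfgi : f i = g i := (Finset.sum_eq_sum_iff_of_le hle).1 hsum i hi
  nlinarith [hfg i hi, hg i hi]

section blockFrob

variable {n k : ℕ} {d : Fin n → ℕ}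

theorem blockFrob_nonneg (W : Matrix ((i : Fin n) × Fin (d i)) (Fin k) ℝ) (i : Fin n) :
    0 ≤ blockFrob W i :=
  Real.sqrt_nonneg _

theorem blockFrob_eq_zero_iff (W : Matrix ((i : Fin n) × Fin (d i)) (Fin k) ℝ) (i : Fin n) :
    blockFrob W i = 0 ↔ ∀ a j, W ⟨i, a⟩ j = 0 := by
  have hrow : ∀ a, 0 ≤ ∑ j, W ⟨i, a⟩ j ^ 2 := fun a => by positivity
  rw [blockFrob, Real.sqrt_eq_zero (Finset.sum_nonneg fun a _ => hrow a),
    Fintype.sum_eq_zero_iff_of_nonneg hrow]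
  simp only [funext_iff, Pi.zero_apply,
    Fintype.sum_eq_zero_iff_of_nonneg (fun _ => sq_nonneg _), sq_eq_zero_iff]

theorem block_inner_le_blockFrob_mul (Z W : Matrix ((i : Fin n) × Fin (d i)) (Fin k) ℝ)
    (i : Fin n) :
    ∑ a, ∑ j, Z ⟨i, a⟩ j * W ⟨i, a⟩ j ≤ blockFrob Z i * blockFrob W i := by
  simpa [blockFrob, Fintype.sum_prod_type] using
    Real.sum_mul_le_sqrt_mul_sqrt Finset.univ
      (fun p : Fin (d i) × Fin k => Z ⟨i, p.1⟩ p.2) (fun p => W ⟨i, p.1⟩ p.2)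

end blockFrob

/-- Strict dual feasibility forces zero blocks: if `‖Z_i‖_F < 1` on `Sᶜ`,
`‖Z_i‖_F ≤ 1` on `S`, and `⟨Z, W⟩ = Σ_i ‖W_i‖_F`, then `W_i = 0` for `i ∈ Sᶜ`. -/
theorem stmt6 {n k : ℕ} {d : Fin n → ℕ} (S : Set (Fin n))
    (W Z : Matrix ((i : Fin n) × Fin (d i)) (Fin k) ℝ)
    (hZc : ∀ i ∉ S, blockFrob Z i < 1)
    (hZ : ∀ i ∈ S, blockFrob Z i ≤ 1)
    (halign : ∑ p, ∑ j, Z p j * W p j = ∑ i, blockFrob W i) :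
    ∀ i ∉ S, ∀ (a : Fin (d i)) (j : Fin k), W ⟨i, a⟩ j = 0 := by
  intro i hi
  have hZle : ∀ i, blockFrob Z i ≤ 1 := fun i => by
    by_cases h : i ∈ S
    · exact hZ i h
    · exact (hZc i h).le
  rw [Fintype.sum_sigma] at halign
  refine (blockFrob_eq_zero_iff W i).1 <|
    Finset.eq_zero_of_sum_eq_of_le_mul (fun i _ => blockFrob_nonneg W i) (fun i _ => hZle i)
      (fun i _ => block_inner_le_blockFrob_mul Z W i) halign (Finset.mem_univ i) (hZc i hi)
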